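/- arXiv:2603.10452 — 8 statements merged into one kernel-verified Lean document; each statement's English description precedes it below -/
import Mathlib

section
/- Suppose z_1 < z_2 < ... < z_n are real numbers. For each u ∈ ℝ^n, let C(u) ∈ ℝ^{n×n} be the cost matrix with entries C_{ij} = (z_i − u_j)^2, and let 𝒫(u) be the set of minimizers of P ↦ Σ_{i,j} C_{ij} P_{ij} over the scaled Birkhoff polytope B(n,n). Then the set { ŷ ∈ ℝ^n : ŷ = n P u for some u ∈ ℝ^n and some P ∈ 𝒫(u) } is exactly the set { v ∈ ℝ^n : v_1 ≤ v_2 ≤ ... ≤ v_n } of nondecreasing sequences. -/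
/-!
Expanding the square, on `B(n,k)` the cost of `P` is a constant minus `2 z ⬝ᵥ (P *ᵥ u)`, so
optimal couplings are exactly those maximising this correlation. Swapping two rows of an optimal
`P` cannot increase it, which is the two-point rearrangement inequality between `P *ᵥ u` and
`z`; as `z` is strictly increasing, `P *ᵥ u` is monotone. Conversely, for monotone `v` the
coupling `n⁻¹ • 1` is optimal for `u = v`: by Birkhoff's theorem `n • Q` is a convex combination
of permutation matrices, and for each of them the rearrangement inequality bounds the correlation
by `z ⬝ᵥ v`.
-/

/-- The scaled Birkhoff polytope `B(n,k)`: nonnegative matrices whose rows sum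
to `1/n` and whose columns sum to `1/k`. -/
def scaledBirkhoff (n k : ℕ) : Set (Matrix (Fin n) (Fin k) ℝ) :=
  {P | (∀ i j, 0 ≤ P i j) ∧ (∀ i, ∑ j, P i j = 1 / n) ∧ (∀ j, ∑ i, P i j = 1 / k)}

/-- The transport cost `Σ_{i,j} C_{ij} P_{ij}` with `C_{ij} = (z_i − u_j)^2`. -/
def transportCost {n k : ℕ} (z : Fin n → ℝ) (u : Fin k → ℝ)
    (P : Matrix (Fin n) (Fin k) ℝ) : ℝ :=
  ∑ i, ∑ j, (z i - u j) ^ 2 * P i j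

open Finset Matrix

theorem Monovary.dotProduct_mulVec_le {R ι : Type*} [Field R] [LinearOrder R]
    [IsStrictOrderedRing R] [Fintype ι] [DecidableEq ι] {f g : ι → R} (hfg : Monovary f g)
    {M : Matrix ι ι R} (hM : M ∈ doublyStochastic R ι) : f ⬝ᵥ (M *ᵥ g) ≤ f ⬝ᵥ g := by
  have hconv : Convex R {A : Matrix ι ι R | f ⬝ᵥ (A *ᵥ g) ≤ f ⬝ᵥ g} :=
    convex_halfSpace_le ⟨fun A B => by simp only [add_mulVec, dotProduct_add],
      fun c A => by simp only [smul_mulVec, dotProduct_smul]⟩ _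
  have hperm : {σ.permMatrix R | σ : Equiv.Perm ι} ⊆ {A | f ⬝ᵥ (A *ᵥ g) ≤ f ⬝ᵥ g} := by
    rintro _ ⟨σ, rfl⟩
    simpa only [Set.mem_ofPred_eq, permMatrix_mulVec, dotProduct, Function.comp_apply] using
      hfg.sum_mul_comp_perm_le_sum_mul
  refine convexHull_min hperm hconv ?_
  rwa [← doublyStochastic_eq_convexHull_permMatrix]

theorem dotProduct_comp_swap_add {R ι : Type*} [CommRing R] [Fintype ι] [DecidableEq ι]
    (x y : ι → R) (a b : ι) :
    x ⬝ᵥ (y ∘ Equiv.swap a b) + (x a * y a + x b * y b) = x ⬝ᵥ y + (x a * y b + x b * y a) := by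
  rcases eq_or_ne a b with rfl | hab
  · simp
  simp only [dotProduct, Function.comp_apply]
  rw [← add_sum_erase _ _ (mem_univ a), ← add_sum_erase _ _ (mem_erase.2 ⟨hab.symm, mem_univ b⟩),
    ← add_sum_erase _ _ (mem_univ a), ← add_sum_erase _ _ (mem_erase.2 ⟨hab.symm, mem_univ b⟩),
    sum_congr rfl fun i hi => by
      rw [Equiv.swap_apply_of_ne_of_ne (ne_of_mem_erase (mem_of_mem_erase hi))
        (ne_of_mem_erase hi)]]
  simp only [Equiv.swap_apply_left, Equiv.swap_apply_right]
  ring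

variable {n k : ℕ}

theorem transportCost_eq {z : Fin n → ℝ} {u : Fin k → ℝ} {Q : Matrix (Fin n) (Fin k) ℝ}
    (hQ : Q ∈ scaledBirkhoff n k) :
    transportCost z u Q = (∑ i, z i ^ 2) / n + (∑ j, u j ^ 2) / k - 2 * z ⬝ᵥ (Q *ᵥ u) := by
  obtain ⟨-, hrow, hcol⟩ := hQ
  have hz : ∑ i, ∑ j, z i ^ 2 * Q i j = (∑ i, z i ^ 2) / n := by
    simp only [← mul_sum, hrow, sum_div, mul_one_div]
  have hu : ∑ i, ∑ j, u j ^ 2 * Q i j = (∑ j, u j ^ 2) / k := by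
    rw [sum_comm]; simp only [← mul_sum, hcol, sum_div, mul_one_div]
  have hzu : ∑ i, ∑ j, 2 * z i * u j * Q i j = 2 * z ⬝ᵥ (Q *ᵥ u) := by
    simp only [dotProduct, mulVec, mul_sum]
    exact sum_congr rfl fun i _ => sum_congr rfl fun j _ => by ring
  simp only [transportCost, sub_sq, add_mul, sub_mul, sum_add_distrib, sum_sub_distrib, hz, hu, hzu]
  ring

theorem transportCost_le_transportCost_iff {z : Fin n → ℝ} {u : Fin k → ℝ}
    {P Q : Matrix (Fin n) (Fin k) ℝ} (hP : P ∈ scaledBirkhoff n k) (hQ : Q ∈ scaledBirkhoff n k) :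
    transportCost z u P ≤ transportCost z u Q ↔ z ⬝ᵥ (Q *ᵥ u) ≤ z ⬝ᵥ (P *ᵥ u) := by
  rw [transportCost_eq hP, transportCost_eq hQ]
  constructor <;> intro h <;> linarith

theorem submatrix_mem_scaledBirkhoff {P : Matrix (Fin n) (Fin k) ℝ} (hP : P ∈ scaledBirkhoff n k)
    (σ : Equiv.Perm (Fin n)) : P.submatrix σ id ∈ scaledBirkhoff n k := by
  obtain ⟨hnn, hrow, hcol⟩ := hP
  exact ⟨fun i j => hnn _ _, fun i => hrow _,
    fun j => (Equiv.sum_comp σ fun i => P i j).trans (hcol j)⟩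

theorem IsMinOn.monovary_mulVec {z : Fin n → ℝ} {u : Fin k → ℝ} {P : Matrix (Fin n) (Fin k) ℝ}
    (hmin : IsMinOn (transportCost z u) (scaledBirkhoff n k) P) (hP : P ∈ scaledBirkhoff n k) :
    Monovary (P *ᵥ u) z := by
  refine monovary_iff_mul_rearrangement.2 fun a b => ?_
  have hswap := submatrix_mem_scaledBirkhoff hP (Equiv.swap a b)
  have hle : z ⬝ᵥ ((P *ᵥ u) ∘ Equiv.swap a b) ≤ z ⬝ᵥ (P *ᵥ u) :=
    (transportCost_le_transportCost_iff hP hswap).1 (isMinOn_iff.1 hmin _ hswap)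
  linarith [dotProduct_comp_swap_add z (P *ᵥ u) a b]

theorem smul_mem_doublyStochastic_of_mem_scaledBirkhoff (hn : 0 < n)
    {Q : Matrix (Fin n) (Fin n) ℝ} (hQ : Q ∈ scaledBirkhoff n n) :
    (n : ℝ) • Q ∈ doublyStochastic ℝ (Fin n) := by
  obtain ⟨hnn, hrow, hcol⟩ := hQ
  have hn' : (n : ℝ) ≠ 0 := by positivity
  refine mem_doublyStochastic_iff_sum.2
    ⟨fun i j => mul_nonneg n.cast_nonneg (hnn i j), fun i => ?_, fun j => ?_⟩
  · simp only [Matrix.smul_apply, smul_eq_mul, ← mul_sum, hrow, mul_one_div_cancel hn']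
  · simp only [Matrix.smul_apply, smul_eq_mul, ← mul_sum, hcol, mul_one_div_cancel hn']

theorem inv_smul_one_mem_scaledBirkhoff :
    ((n : ℝ)⁻¹ • 1 : Matrix (Fin n) (Fin n) ℝ) ∈ scaledBirkhoff n n := by
  refine ⟨fun i j => ?_, fun i => by simp [one_apply], fun j => by simp [one_apply]⟩
  simp only [Matrix.smul_apply, one_apply, smul_eq_mul, mul_ite, mul_one, mul_zero]
  positivity

theorem isMinOn_transportCost_inv_smul_one (hn : 0 < n) {z u : Fin n → ℝ} (hzu : Monovary z u) :
    IsMinOn (transportCost z u) (scaledBirkhoff n n) ((n : ℝ)⁻¹ • 1) := by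
  refine isMinOn_iff.2 fun Q hQ =>
    (transportCost_le_transportCost_iff inv_smul_one_mem_scaledBirkhoff hQ).2 ?_
  have hn' : (0 : ℝ) < n := by exact_mod_cast hn
  calc z ⬝ᵥ (Q *ᵥ u) = (n : ℝ)⁻¹ * z ⬝ᵥ (((n : ℝ) • Q) *ᵥ u) := by
        rw [smul_mulVec, dotProduct_smul, smul_eq_mul, inv_mul_cancel_left₀ hn'.ne']
    _ ≤ (n : ℝ)⁻¹ * z ⬝ᵥ u := by
        gcongr
        exact hzu.dotProduct_mulVec_le (smul_mem_doublyStochastic_of_mem_scaledBirkhoff hn hQ)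
    _ = z ⬝ᵥ (((n : ℝ)⁻¹ • 1) *ᵥ u) := by
        rw [smul_mulVec, one_mulVec, dotProduct_smul, smul_eq_mul]

/-- for strictly increasing inputs `z`, the set of vectors of the
form `n P u` with `P` an optimal coupling for the cost `(z_i − u_j)^2` is
exactly the set of nondecreasing vectors. -/
theorem brenierIR_1d_characterization (n : ℕ) (hn : 0 < n)
    (z : Fin n → ℝ) (hz : StrictMono z) :
    {yhat : Fin n → ℝ |
      ∃ (u : Fin n → ℝ) (P : Matrix (Fin n) (Fin n) ℝ),
        P ∈ scaledBirkhoff n n ∧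
        (∀ Q ∈ scaledBirkhoff n n, transportCost z u P ≤ transportCost z u Q) ∧
        yhat = fun i => (n : ℝ) * ∑ j, P i j * u j} =
    {v : Fin n → ℝ | Monotone v} := by
  ext yhat
  constructor
  · rintro ⟨u, P, hP, hmin, rfl⟩
    have hPu : Monotone (P *ᵥ u) := hz.trans_monovary ((isMinOn_iff.2 hmin).monovary_mulVec hP)
    exact hPu.const_mul n.cast_nonneg
  · intro hv
    have hn' : (n : ℝ) ≠ 0 := by positivity
    refine ⟨yhat, _, inv_smul_one_mem_scaledBirkhoff,
      isMinOn_iff.1 (isMinOn_transportCost_inv_smul_one hn (hz.monotone.monovary hv)), ?_⟩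
    funext i
    change yhat i = n * (((n : ℝ)⁻¹ • 1 : Matrix (Fin n) (Fin n) ℝ) *ᵥ yhat) i
    rw [smul_mulVec, one_mulVec, Pi.smul_apply, smul_eq_mul, mul_inv_cancel_left₀ hn']
end

section
/- Suppose z_1 < z_2 < ... < z_n are real numbers and u ∈ ℝ^n. Let C_{ij} = (z_i − u_j)^2 and let P be any minimizer of P ↦ Σ_{i,j} C_{ij} P_{ij} over the scaled Birkhoff polytope B(n,n). Then the vector ŷ = nPu, with entries ŷ_i = n Σ_j P_{ij} u_j, is nondecreasing: ŷ_1 ≤ ŷ_2 ≤ ... ≤ ŷ_n. -/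
/-- if `z` is strictly increasing and `P` is an optimal coupling
for the cost `(z_i − u_j)^2` over the scaled Birkhoff polytope, then the vector
`ŷ = n P u` is nondecreasing. -/
theorem brenierIR_1d_monotone (n : ℕ) (hn : 0 < n)
    (z : Fin n → ℝ) (hz : StrictMono z) (u : Fin n → ℝ)
    (P : Matrix (Fin n) (Fin n) ℝ) (hP : P ∈ scaledBirkhoff n n)
    (hopt : ∀ Q ∈ scaledBirkhoff n n, transportCost z u P ≤ transportCost z u Q) :
    Monotone (fun i => (n : ℝ) * ∑ j, P i j * u j) := by
  intro a b hab
  rcases eq_or_lt_of_le hab with rfl | h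
  · exact le_refl _
  obtain ⟨hPnn, hProw, hPcol⟩ := hP
  have hnab : a ≠ b := ne_of_lt h
  set Q : Matrix (Fin n) (Fin n) ℝ := fun r j => P (Equiv.swap a b r) j with hQdef
  have hQmem : Q ∈ scaledBirkhoff n n := by
    refine ⟨fun i j => hPnn _ _, fun i => hProw _, fun j => ?_⟩
    rw [← hPcol j]
    exact Fintype.sum_equiv (Equiv.swap a b) _ _ (fun r => rfl)
  have hle := hopt Q hQmem
  have hdiff : transportCost z u Q - transportCost z u P
      = ∑ r, ∑ j, (z r - u j) ^ 2 * (Q r j - P r j) := by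
    unfold transportCost
    rw [← Finset.sum_sub_distrib]
    refine Finset.sum_congr rfl fun r _ => ?_
    rw [← Finset.sum_sub_distrib]
    exact Finset.sum_congr rfl fun j _ => by ring
  have hzero : ∀ r, r ≠ a → r ≠ b →
      (∑ j, (z r - u j) ^ 2 * (Q r j - P r j)) = 0 := by
    intro r hra hrb
    have hs : Equiv.swap a b r = r := Equiv.swap_apply_of_ne_of_ne hra hrb
    simp [hQdef, hs]
  have hsum : (∑ r, ∑ j, (z r - u j) ^ 2 * (Q r j - P r j))
      = (∑ j, (z a - u j) ^ 2 * (Q a j - P a j))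
        + ∑ j, (z b - u j) ^ 2 * (Q b j - P b j) := by
    rw [← Finset.sum_pair (f := fun r => ∑ j, (z r - u j) ^ 2 * (Q r j - P r j)) hnab]
    refine (Finset.sum_subset (Finset.subset_univ _) ?_).symm
    intro r _ hr
    simp only [Finset.mem_insert, Finset.mem_singleton, not_or] at hr
    exact hzero r hr.1 hr.2
  have hQa : ∀ j, Q a j = P b j := fun j => by simp [hQdef]
  have hQb : ∀ j, Q b j = P a j := fun j => by simp [hQdef]
  have hkey : transportCost z u Q - transportCost z u P
      = 2 * (z b - z a) * ((∑ j, P b j * u j) - ∑ j, P a j * u j) := by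
    rw [hdiff, hsum]
    simp_rw [hQa, hQb]
    have h1 : ∀ j, (z a - u j) ^ 2 * (P b j - P a j) + (z b - u j) ^ 2 * (P a j - P b j)
        = (z a ^ 2 - z b ^ 2) * (P b j - P a j)
          + 2 * (z b - z a) * (P b j * u j - P a j * u j) := fun j => by ring
    rw [← Finset.sum_add_distrib]
    simp_rw [h1]
    rw [Finset.sum_add_distrib, ← Finset.mul_sum, ← Finset.mul_sum,
      Finset.sum_sub_distrib, Finset.sum_sub_distrib, hProw a, hProw b]
    ring
  have hzab : (0:ℝ) < z b - z a := sub_pos.mpr (hz h)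
  have h0 : (0:ℝ) ≤ 2 * (z b - z a) * ((∑ j, P b j * u j) - ∑ j, P a j * u j) := by
    rw [← hkey]; linarith
  have hS : (∑ j, P a j * u j) ≤ ∑ j, P b j * u j := by nlinarith
  exact mul_le_mul_of_nonneg_left hS (Nat.cast_nonneg n)
end

section
/- Let z_1 ≤ z_2 ≤ ... ≤ z_n and u_1 ≤ u_2 ≤ ... ≤ u_n be real numbers, and let C_{ij} = (z_i − u_j)^2. Then the matrix (1/n)·I_n (1/n times the n×n identity matrix) minimizes P ↦ Σ_{i,j} C_{ij} P_{ij} over the scaled Birkhoff polytope B(n,n); that is, for every P ∈ B(n,n), (1/n) Σ_i (z_i − u_i)^2 ≤ Σ_{i,j} (z_i − u_j)^2 P_{ij}. -/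
open Finset



namespace IC

variable {n : ℕ}

noncomputable def ext (hn : 0 < n) (v : Fin n → ℝ) : ℕ → ℝ :=
  fun k => v ⟨min k (n-1), by omega⟩

lemma ext_nonneg (hn : 0 < n) {v : Fin n → ℝ} (hv : Monotone v) (a : ℕ) :
    0 ≤ ext hn v (a+1) - ext hn v a := by
  have := hv (show (⟨min a (n-1), by omega⟩ : Fin n) ≤ ⟨min (a+1) (n-1), by omega⟩ by
    simp only [Fin.mk_le_mk]; omega)
  simpa [ext] using this

lemma ite_sum {α : Type*} {c : Prop} [Decidable c] {s : Finset α} (f : α → ℝ) :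
    (if c then ∑ x ∈ s, f x else 0) = ∑ x ∈ s, if c then f x else 0 := by
  split <;> simp

lemma ite_sub (c : Prop) [Decidable c] (x y : ℝ) :
    (if c then x - y else 0) = (if c then x else 0) - (if c then y else 0) := by
  split <;> simp

lemma tele' (hn : 0 < n) (v : Fin n → ℝ) (i : Fin n) :
    v i = ext hn v 0 + ∑ a ∈ Finset.range n,
      (if a < i.val then ext hn v (a+1) - ext hn v a else 0) := by
  rw [← Finset.sum_filter]
  have hf : (Finset.range n).filter (fun a => a < i.val) = Finset.range i.val := by
    ext a; simp; omega
  rw [hf, Finset.sum_range_sub]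
  have h1 : ext hn v i.val = v i := by
    unfold ext; congr 1; exact Fin.ext (by simp; omega)
  rw [h1]; ring

lemma expand (hn : 0 < n) (v : Fin n → ℝ) (f : Fin n → ℝ) :
    ∑ i, f i * v i = ext hn v 0 * ∑ i, f i
      + ∑ a ∈ Finset.range n, (ext hn v (a+1) - ext hn v a) *
          (∑ i, if a < i.val then f i else 0) := by
  have h : ∀ i : Fin n, f i * v i = ext hn v 0 * f i
      + ∑ a ∈ Finset.range n,
          (if a < i.val then (ext hn v (a+1) - ext hn v a) * f i else 0) := by
    intro i
    rw [show v i = _ from tele' hn v i, mul_add, Finset.mul_sum, mul_comm (f i)]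
    congr 1
    exact Finset.sum_congr rfl fun a _ => by rw [mul_ite, mul_zero, mul_comm]
  rw [Finset.sum_congr rfl fun i _ => h i, Finset.sum_add_distrib, ← Finset.mul_sum,
    Finset.sum_comm]
  congr 1
  exact Finset.sum_congr rfl fun a _ => by
    rw [Finset.mul_sum]
    exact Finset.sum_congr rfl fun i _ => by rw [mul_ite, mul_zero]

lemma Gzero (hn : 0 < n) (z u : Fin n → ℝ) (M : Fin n → Fin n → ℝ)
    (hrow : ∀ i, ∑ j, M i j = 0) (hcol : ∀ j, ∑ i, M i j = 0) :
    ∑ i, ∑ j, z i * u j * M i j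
      = ∑ a ∈ Finset.range n, (ext hn z (a+1) - ext hn z a) *
          (∑ b ∈ Finset.range n, (ext hn u (b+1) - ext hn u b) *
            (∑ j, if b < j.val then (∑ i, if a < i.val then M i j else 0) else 0)) := by
  have step1 : ∑ i, ∑ j, z i * u j * M i j
      = ∑ j, ∑ i, (u j * M i j) * z i := by
    rw [Finset.sum_comm]
    exact Finset.sum_congr rfl fun j _ => Finset.sum_congr rfl fun i _ => by ring
  rw [step1]
  have step2 : ∀ j : Fin n, ∑ i, (u j * M i j) * z i
      = ∑ a ∈ Finset.range n, (ext hn z (a+1) - ext hn z a) *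
          (u j * ∑ i, if a < i.val then M i j else 0) := by
    intro j
    rw [expand hn z (fun i => u j * M i j), ← Finset.mul_sum, hcol j, mul_zero,
      mul_zero, zero_add]
    refine Finset.sum_congr rfl fun a _ => ?_
    congr 1
    rw [Finset.mul_sum]
    exact Finset.sum_congr rfl fun i _ => by rw [mul_ite, mul_zero]
  rw [Finset.sum_congr rfl fun j _ => step2 j, Finset.sum_comm]
  refine Finset.sum_congr rfl fun a _ => ?_
  rw [← Finset.mul_sum]
  congr 1
  have step3 : ∑ j, u j * ∑ i, (if a < i.val then M i j else 0)
      = ∑ j, (∑ i, if a < i.val then M i j else 0) * u j :=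
    Finset.sum_congr rfl fun j _ => mul_comm _ _
  rw [step3, expand hn u (fun j => ∑ i, if a < i.val then M i j else 0)]
  have step4 : ∑ j, ∑ i, (if a < i.val then M i j else 0) = 0 := by
    rw [Finset.sum_comm]
    refine Finset.sum_eq_zero fun i _ => ?_
    rw [← ite_sum, hrow i]; split <;> rfl
  rw [step4, mul_zero, zero_add]

lemma swapS (p q : Fin n → Prop) [DecidablePred p] [DecidablePred q]
    (M : Fin n → Fin n → ℝ) :
    ∑ j, (if q j then ∑ i, (if p i then M i j else 0) else 0)
      = ∑ i, (if p i then ∑ j, (if q j then M i j else 0) else 0) := by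
  have h1 : ∀ j, (if q j then ∑ i, (if p i then M i j else 0) else 0)
      = ∑ i, if p i ∧ q j then M i j else 0 := by
    intro j; split_ifs with h <;> simp [h]
  have h2 : ∀ i, (if p i then ∑ j, (if q j then M i j else 0) else 0)
      = ∑ j, if p i ∧ q j then M i j else 0 := by
    intro i; split_ifs with h <;> simp [h]
  rw [Finset.sum_congr rfl fun j _ => h1 j, Finset.sum_congr rfl fun i _ => h2 i,
    Finset.sum_comm]

lemma Sle (P : Fin n → Fin n → ℝ) (hP0 : ∀ i j, 0 ≤ P i j)
    (hProw : ∀ i, ∑ j, P i j = 1/(n:ℝ)) (hPcol : ∀ j, ∑ i, P i j = 1/(n:ℝ)) (a b : ℕ) :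
    (∑ j : Fin n, if b < j.val then (∑ i : Fin n, if a < i.val then P i j else 0) else 0)
      ≤ ∑ j : Fin n, if b < j.val then
          (∑ i : Fin n, if a < i.val then (if i = j then 1/(n:ℝ) else 0) else 0) else 0 := by
  have hQin : ∀ j : Fin n, (∑ i, if a < i.val then (if i = j then 1/(n:ℝ) else 0) else 0)
      = if a < j.val then 1/(n:ℝ) else 0 := by
    intro j
    have h : ∀ i : Fin n, (if a < i.val then (if i = j then 1/(n:ℝ) else 0) else 0)
        = if i = j then (if a < j.val then 1/(n:ℝ) else 0) else 0 := by
      intro i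
      by_cases hij : i = j
      · subst hij; simp
      · simp [hij]
    rw [Finset.sum_congr rfl fun i _ => h i, Finset.sum_ite_eq']
    simp
  have hQin' : ∀ i : Fin n, (∑ j, if b < j.val then (if i = j then 1/(n:ℝ) else 0) else 0)
      = if b < i.val then 1/(n:ℝ) else 0 := by
    intro i
    have h : ∀ j : Fin n, (if b < j.val then (if i = j then 1/(n:ℝ) else 0) else 0)
        = if j = i then (if b < i.val then 1/(n:ℝ) else 0) else 0 := by
      intro j
      by_cases hij : j = i
      · subst hij; simp
      · have hji : i ≠ j := fun h => hij h.symm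
        simp [hij, hji]
    rw [Finset.sum_congr rfl fun j _ => h j, Finset.sum_ite_eq']
    simp
  rcases le_total a b with hab | hba
  · calc (∑ j : Fin n, if b < j.val then (∑ i : Fin n, if a < i.val then P i j else 0) else 0)
        ≤ ∑ j : Fin n, if b < j.val then 1/(n:ℝ) else 0 := by
          refine Finset.sum_le_sum fun j _ => ?_
          split_ifs with h
          · calc (∑ i, if a < i.val then P i j else 0) ≤ ∑ i, P i j :=
                Finset.sum_le_sum fun i _ => by split_ifs; exacts [le_refl _, hP0 i j]
              _ = 1/(n:ℝ) := hPcol j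
          · exact le_refl _
      _ = _ := by
          refine (Finset.sum_congr rfl fun j _ => ?_).symm
          rw [hQin j]
          split_ifs with h1 h2
          · rfl
          · exfalso; omega
          · rfl
  · rw [swapS (fun i => a < i.val) (fun j => b < j.val) P,
      swapS (fun i => a < i.val) (fun j => b < j.val) (fun i j => if i = j then 1/(n:ℝ) else 0)]
    calc (∑ i : Fin n, if a < i.val then (∑ j : Fin n, if b < j.val then P i j else 0) else 0)
        ≤ ∑ i : Fin n, if a < i.val then 1/(n:ℝ) else 0 := by
          refine Finset.sum_le_sum fun i _ => ?_
          split_ifs with h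
          · calc (∑ j, if b < j.val then P i j else 0) ≤ ∑ j, P i j :=
                Finset.sum_le_sum fun j _ => by split_ifs; exacts [le_refl _, hP0 i j]
              _ = 1/(n:ℝ) := hProw i
          · exact le_refl _
      _ = _ := by
          refine (Finset.sum_congr rfl fun i _ => ?_).symm
          rw [hQin' i]
          split_ifs with h1 h2
          · rfl
          · exfalso; omega
          · rfl

lemma key (hn : 0 < n) (z u : Fin n → ℝ) (hz : Monotone z) (hu : Monotone u)
    (P : Fin n → Fin n → ℝ) (hP0 : ∀ i j, 0 ≤ P i j)
    (hProw : ∀ i, ∑ j, P i j = 1/(n:ℝ)) (hPcol : ∀ j, ∑ i, P i j = 1/(n:ℝ)) :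
    ∑ i, ∑ j, z i * u j * P i j ≤ (1/(n:ℝ)) * ∑ i, z i * u i := by
  set Q : Fin n → Fin n → ℝ := fun i j => if i = j then 1/(n:ℝ) else 0 with hQ
  have hQrow : ∀ i : Fin n, ∑ j, Q i j = 1/(n:ℝ) := by
    intro i; simp [hQ]
  have hQcol : ∀ j : Fin n, ∑ i, Q i j = 1/(n:ℝ) := by
    intro j; simp [hQ]
  have hGQ : ∑ i, ∑ j, z i * u j * Q i j = (1/(n:ℝ)) * ∑ i, z i * u i := by
    rw [Finset.mul_sum]
    refine Finset.sum_congr rfl fun i _ => ?_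
    have h : ∀ j : Fin n, z i * u j * Q i j
        = if i = j then z i * u j * (1/(n:ℝ)) else 0 := by
      intro j; simp only [hQ]; split <;> simp
    rw [Finset.sum_congr rfl fun j _ => h j, Finset.sum_ite_eq]
    simp; ring
  have hpos : 0 ≤ ∑ i, ∑ j, z i * u j * (Q i j - P i j) := by
    rw [Gzero hn z u (fun i j => Q i j - P i j)
      (fun i => by rw [Finset.sum_sub_distrib, hQrow i, hProw i]; ring)
      (fun j => by rw [Finset.sum_sub_distrib, hQcol j, hPcol j]; ring)]
    refine Finset.sum_nonneg fun a _ => mul_nonneg (ext_nonneg hn hz a) ?_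
    refine Finset.sum_nonneg fun b _ => mul_nonneg (ext_nonneg hn hu b) ?_
    have hsub : (∑ j : Fin n, if b < j.val then
          (∑ i : Fin n, if a < i.val then (Q i j - P i j) else 0) else 0)
        = (∑ j : Fin n, if b < j.val then (∑ i : Fin n, if a < i.val then Q i j else 0) else 0)
          - ∑ j : Fin n, if b < j.val then (∑ i : Fin n, if a < i.val then P i j else 0) else 0 := by
      rw [← Finset.sum_sub_distrib]
      refine Finset.sum_congr rfl fun j _ => ?_
      rw [← ite_sub, ← Finset.sum_sub_distrib]
      congr 1
      · refine Finset.sum_congr rfl fun i _ => ?_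
        rw [← ite_sub]
    rw [hsub, sub_nonneg]
    exact Sle P hP0 hProw hPcol a b
  have hsplit : ∑ i, ∑ j, z i * u j * (Q i j - P i j)
      = (∑ i, ∑ j, z i * u j * Q i j) - ∑ i, ∑ j, z i * u j * P i j := by
    rw [← Finset.sum_sub_distrib]
    refine Finset.sum_congr rfl fun i _ => ?_
    rw [← Finset.sum_sub_distrib]
    exact Finset.sum_congr rfl fun j _ => by ring
  rw [hsplit, hGQ] at hpos
  linarith

end IC


/-- if both `z` and `u` are nondecreasing, then `(1/n)·I_n`
minimizes the transport cost `Σ_{i,j} (z_i − u_j)^2 P_{ij}` over the scaled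
Birkhoff polytope `B(n,n)`. -/
theorem identity_coupling_optimal (n : ℕ) (hn : 0 < n)
    (z u : Fin n → ℝ) (hz : Monotone z) (hu : Monotone u) :
    ((1 / (n : ℝ)) • (1 : Matrix (Fin n) (Fin n) ℝ)) ∈ scaledBirkhoff n n ∧
    ∀ P ∈ scaledBirkhoff n n,
      (1 / (n : ℝ)) * ∑ i, (z i - u i) ^ 2 ≤ ∑ i, ∑ j, (z i - u j) ^ 2 * P i j := by
  constructor
  · refine ⟨fun i j => ?_, fun i => ?_, fun j => ?_⟩
    · rw [Matrix.smul_apply, Matrix.one_apply]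
      split_ifs <;> simp
    · simp [Matrix.smul_apply, Matrix.one_apply, Finset.sum_ite_eq]
    · simp [Matrix.smul_apply, Matrix.one_apply, Finset.sum_ite_eq']
  · rintro P ⟨hP0, hProw, hPcol⟩
    have hkey := IC.key hn z u hz hu (fun i j => P i j) hP0 hProw hPcol
    have e2 : ∑ i, ∑ j, z i ^ 2 * P i j = (1/(n:ℝ)) * ∑ i, z i ^ 2 := by
      rw [Finset.mul_sum]
      refine Finset.sum_congr rfl fun i _ => ?_
      rw [← Finset.mul_sum, hProw i]; ring
    have e3 : ∑ i, ∑ j, u j ^ 2 * P i j = (1/(n:ℝ)) * ∑ j, u j ^ 2 := by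
      rw [Finset.sum_comm, Finset.mul_sum]
      refine Finset.sum_congr rfl fun j _ => ?_
      rw [← Finset.mul_sum, hPcol j]; ring
    have e1 : ∑ i, ∑ j, (z i - u j) ^ 2 * P i j
        = (∑ i, ∑ j, z i ^ 2 * P i j) + (∑ i, ∑ j, u j ^ 2 * P i j)
          - 2 * ∑ i, ∑ j, z i * u j * P i j := by
      have h : ∀ i : Fin n, ∀ j : Fin n, (z i - u j) ^ 2 * P i j
          = z i ^ 2 * P i j + u j ^ 2 * P i j - 2 * (z i * u j * P i j) := by
        intro i j; ring
      rw [Finset.sum_congr rfl fun i _ => Finset.sum_congr rfl fun j _ => h i j]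
      simp [Finset.sum_add_distrib, Finset.sum_sub_distrib, Finset.mul_sum]
    have e4 : ∑ i, (z i - u i) ^ 2
        = (∑ i, z i ^ 2) + (∑ i, u i ^ 2) - 2 * ∑ i, z i * u i := by
      have h : ∀ i : Fin n, (z i - u i) ^ 2 = z i ^ 2 + u i ^ 2 - 2 * (z i * u i) := by
        intro i; ring
      rw [Finset.sum_congr rfl fun i _ => h i]
      simp [Finset.sum_add_distrib, Finset.sum_sub_distrib, Finset.mul_sum]
    rw [e1, e2, e3, e4, mul_sub, mul_add]
    have : (1/(n:ℝ)) * (2 * ∑ i, z i * u i) = 2 * ((1/(n:ℝ)) * ∑ i, z i * u i) := by ring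
    rw [this]
    linarith
end

section
/- Suppose z_1 < z_2 < ... < z_n are real numbers. Then for every nondecreasing vector v ∈ ℝ^n (v_1 ≤ v_2 ≤ ... ≤ v_n) there exist u ∈ ℝ^n and a matrix P ∈ B(n,n) minimizing P ↦ Σ_{i,j} (z_i − u_j)^2 P_{ij} over B(n,n) such that v = nPu, i.e. v_i = n Σ_j P_{ij} u_j for all i. (One may take u = v and P = (1/n)·I_n.) -/
open Finset in
lemma scaledBirkhoff_key (n : ℕ) (hn : 0 < n) (z v : Fin n → ℝ)
    (hz : Monotone z) (hv : Monotone v)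
    (Q : Matrix (Fin n) (Fin n) ℝ) (hQ : Q ∈ scaledBirkhoff n n) :
    ∑ i, ∑ j, z i * v j * Q i j ≤ (∑ i, z i * v i) / n := by
  obtain ⟨hpos, hrow, hcol⟩ := hQ
  have hn' : (0:ℝ) < n := by exact_mod_cast hn
  have hds : (n : ℝ) • Q ∈ doublyStochastic ℝ (Fin n) := by
    rw [mem_doublyStochastic_iff_sum]
    refine ⟨fun i j => by simpa using mul_nonneg hn'.le (hpos i j), fun i => ?_, fun j => ?_⟩
    · simp only [Matrix.smul_apply, smul_eq_mul, ← Finset.mul_sum, hrow]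
      field_simp
    · simp only [Matrix.smul_apply, smul_eq_mul, ← Finset.mul_sum, hcol]
      field_simp
  obtain ⟨w, hw0, hw1, hwsum⟩ := exists_eq_sum_perm_of_mem_doublyStochastic hds
  have hmono : Monovary z v := fun i j hij => by
    by_contra h
    push_neg at h
    have : j ≤ i := by
      by_contra h'
      exact absurd (hz (le_of_not_ge h')) (not_le.2 h)
    exact absurd (hv this) (not_le.2 hij)
  have hperm : ∀ σ : Equiv.Perm (Fin n),
      ∑ i, ∑ j, z i * v j * (σ.permMatrix ℝ i j) = ∑ i, z i * v (σ i) := by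
    intro σ
    refine Finset.sum_congr rfl fun i _ => ?_
    simp [Equiv.Perm.permMatrix, PEquiv.toMatrix_apply, Equiv.toPEquiv_apply,
      mul_ite, Finset.sum_ite_eq', mul_comm]
  have hQsum : ∑ i, ∑ j, z i * v j * ((n:ℝ) • Q) i j
      = ∑ σ : Equiv.Perm (Fin n), w σ * ∑ i, z i * v (σ i) := by
    have step : ∑ i, ∑ j, z i * v j * ((n:ℝ) • Q) i j
        = ∑ σ : Equiv.Perm (Fin n), ∑ i, ∑ j,
            w σ * (z i * v j * (σ.permMatrix ℝ i j)) := by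
      rw [← hwsum]
      simp only [Matrix.sum_apply, Matrix.smul_apply, smul_eq_mul, Finset.mul_sum]
      rw [show (∑ i, ∑ j, ∑ σ : Equiv.Perm (Fin n),
          z i * v j * (w σ * σ.permMatrix ℝ i j))
          = ∑ i, ∑ σ : Equiv.Perm (Fin n), ∑ j,
            z i * v j * (w σ * σ.permMatrix ℝ i j) from
        Finset.sum_congr rfl fun i _ => Finset.sum_comm]
      rw [Finset.sum_comm]
      exact Finset.sum_congr rfl fun σ _ => Finset.sum_congr rfl fun i _ =>
        Finset.sum_congr rfl fun j _ => by ring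
    rw [step]
    refine Finset.sum_congr rfl fun σ _ => ?_
    rw [← hperm σ]
    simp only [Finset.mul_sum]
  have hle : ∑ σ : Equiv.Perm (Fin n), w σ * ∑ i, z i * v (σ i) ≤ ∑ i, z i * v i := by
    calc ∑ σ : Equiv.Perm (Fin n), w σ * ∑ i, z i * v (σ i)
        ≤ ∑ σ : Equiv.Perm (Fin n), w σ * ∑ i, z i * v i := by
          refine Finset.sum_le_sum fun σ _ => mul_le_mul_of_nonneg_left ?_ (hw0 σ)
          exact hmono.sum_mul_comp_perm_le_sum_mul
      _ = ∑ i, z i * v i := by rw [← Finset.sum_mul, hw1, one_mul]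
  have : (n:ℝ) * ∑ i, ∑ j, z i * v j * Q i j ≤ ∑ i, z i * v i := by
    calc (n:ℝ) * ∑ i, ∑ j, z i * v j * Q i j
        = ∑ i, ∑ j, z i * v j * ((n:ℝ) • Q) i j := by
          simp only [Matrix.smul_apply, smul_eq_mul, Finset.mul_sum]
          exact Finset.sum_congr rfl fun i _ => Finset.sum_congr rfl fun j _ => by ring
      _ ≤ ∑ i, z i * v i := hQsum ▸ hle
  rw [le_div_iff₀ hn']
  linarith

/-- for strictly increasing `z`, every nondecreasing vector `v`
can be written as `n P u` for some `u` and an optimal coupling `P`. -/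
theorem brenierIR_1d_reverse (n : ℕ) (hn : 0 < n)
    (z : Fin n → ℝ) (hz : StrictMono z) (v : Fin n → ℝ) (hv : Monotone v) :
    ∃ (u : Fin n → ℝ) (P : Matrix (Fin n) (Fin n) ℝ),
      P ∈ scaledBirkhoff n n ∧
      (∀ Q ∈ scaledBirkhoff n n, transportCost z u P ≤ transportCost z u Q) ∧
      ∀ i, v i = (n : ℝ) * ∑ j, P i j * u j := by
  have hn' : (0:ℝ) < n := by exact_mod_cast hn
  set P : Matrix (Fin n) (Fin n) ℝ := fun i j => if i = j then 1 / n else 0 with hP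
  have hPmem : P ∈ scaledBirkhoff n n := by
    refine ⟨fun i j => by dsimp [P]; split <;> positivity, fun i => ?_, fun j => ?_⟩
    · simp [P, Finset.sum_ite_eq]
    · simp [P, Finset.sum_ite_eq']
  -- cost expansion: transportCost z v Q = quad(Q) - 2 * S(Q), quad fixed on B
  have hcost : ∀ Q ∈ scaledBirkhoff n n, transportCost z v Q
      = (∑ i, (z i)^2) / n + (∑ j, (v j)^2) / n - 2 * ∑ i, ∑ j, z i * v j * Q i j := by
    intro Q hQ
    obtain ⟨hpos, hrow, hcol⟩ := hQ
    have expand : transportCost z v Q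
        = ∑ i, ∑ j, ((z i)^2 * Q i j + (v j)^2 * Q i j - 2 * (z i * v j * Q i j)) := by
      unfold transportCost
      exact Finset.sum_congr rfl fun i _ => Finset.sum_congr rfl fun j _ => by ring
    rw [expand]
    simp only [Finset.sum_sub_distrib, Finset.sum_add_distrib, ← Finset.mul_sum]
    have h1 : ∑ i, (z i)^2 * ∑ j, Q i j = (∑ i, (z i)^2) / n := by
      rw [Finset.sum_div]
      exact Finset.sum_congr rfl fun i _ => by rw [hrow i]; ring
    have h2 : ∑ i, ∑ j, (v j)^2 * Q i j = (∑ j, (v j)^2) / n := by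
      rw [Finset.sum_comm, Finset.sum_div]
      refine Finset.sum_congr rfl fun j _ => ?_
      rw [← Finset.mul_sum, hcol j]; ring
    rw [h1, h2]
  have hSP : ∑ i, ∑ j, z i * v j * P i j = (∑ i, z i * v i) / n := by
    rw [Finset.sum_div]
    refine Finset.sum_congr rfl fun i _ => ?_
    simp [P, mul_ite, Finset.sum_ite_eq, div_eq_mul_inv, mul_assoc]
  refine ⟨v, P, hPmem, fun Q hQ => ?_, fun i => ?_⟩
  · rw [hcost P hPmem, hcost Q hQ, hSP]
    have := scaledBirkhoff_key n hn z v hz.monotone hv Q hQ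
    linarith
  · have : ∑ j, P i j * v j = v i / n := by
      simp [P, ite_mul, Finset.sum_ite_eq, div_eq_mul_inv, mul_comm, mul_assoc]
    rw [this]
    field_simp
end

section
/- Suppose z_1 < z_2 < ... < z_n are real numbers and u ∈ ℝ^n. Let σ be a permutation of {1,...,n} such that the permutation matrix P^σ (with P^σ_{ij} = 1/n if j = σ(i) and 0 otherwise) minimizes P ↦ Σ_{i,j} (z_i − u_j)^2 P_{ij} over the scaled Birkhoff polytope B(n,n). Then σ is order-preserving with respect to u: u_{σ(1)} ≤ u_{σ(2)} ≤ ... ≤ u_{σ(n)}. -/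
/-- The (scaled) permutation matrix `P^σ` with `P^σ_{ij} = 1/n` iff `j = σ(i)`. -/
noncomputable def permMatrix (n : ℕ) (σ : Equiv.Perm (Fin n)) : Matrix (Fin n) (Fin n) ℝ :=
  fun i j => if j = σ i then 1 / n else 0


lemma permMatrix_mem (n : ℕ) (σ : Equiv.Perm (Fin n)) :
    permMatrix n σ ∈ scaledBirkhoff n n := by
  refine ⟨fun i j => ?_, fun i => ?_, fun j => ?_⟩
  · unfold permMatrix; positivity
  · simp [permMatrix]
  · unfold permMatrix
    rw [Fintype.sum_equiv σ _ (fun j' => if j = j' then (1/n:ℝ) else 0) (fun _ => rfl)]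
    simp

lemma transportCost_perm (n : ℕ) (z u : Fin n → ℝ) (σ : Equiv.Perm (Fin n)) :
    transportCost z u (permMatrix n σ) = (∑ i, (z i - u (σ i))^2) * (1/n) := by
  unfold transportCost permMatrix
  rw [Finset.sum_mul]
  refine Finset.sum_congr rfl fun i _ => ?_
  simp

/-- if `z` is strictly increasing and the permutation matrix `P^σ`
minimizes the transport cost over the scaled Birkhoff polytope, then `σ` is
order-preserving with respect to `u`: `u ∘ σ` is nondecreasing. -/
theorem optimal_permutation_order_preserving (n : ℕ) (hn : 0 < n)
    (z : Fin n → ℝ) (hz : StrictMono z) (u : Fin n → ℝ)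
    (σ : Equiv.Perm (Fin n))
    (hopt : ∀ Q ∈ scaledBirkhoff n n,
      transportCost z u (permMatrix n σ) ≤ transportCost z u Q) :
    Monotone (fun i => u (σ i)) := by
  intro a b hab
  rcases eq_or_lt_of_le hab with rfl | hlt
  · exact le_rfl
  by_contra hub
  push_neg at hub
  set τ : Equiv.Perm (Fin n) := σ * Equiv.swap a b with hτ
  have hτa : τ a = σ b := by simp [hτ]
  have hτb : τ b = σ a := by simp [hτ]
  have hτx : ∀ x, x ≠ a → x ≠ b → τ x = σ x := by
    intro x hxa hxb
    simp [hτ, Equiv.swap_apply_of_ne_of_ne hxa hxb]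
  have key := hopt (permMatrix n τ) (permMatrix_mem n τ)
  rw [transportCost_perm, transportCost_perm] at key
  have hnpos : (0:ℝ) < 1/n := by positivity
  have hsum : (∑ i, (z i - u (σ i))^2) ≤ ∑ i, (z i - u (τ i))^2 :=
    le_of_mul_le_mul_right (by simpa [mul_comm] using key) hnpos
  set g : Fin n → ℝ := fun i => (z i - u (σ i))^2 with hg
  set h : Fin n → ℝ := fun i => (z i - u (τ i))^2 with hh
  have hdiff : ∑ i, (g i - h i) = (g a - h a) + (g b - h b) := by
    rw [← Finset.sum_subset (Finset.subset_univ ({a, b} : Finset (Fin n)))]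
    · rw [Finset.sum_pair (ne_of_lt hlt)]
    · intro x _ hx
      simp only [Finset.mem_insert, Finset.mem_singleton, not_or] at hx
      simp [hg, hh, hτx x hx.1 hx.2]
  have hdiff2 : ∑ i, (g i - h i) ≤ 0 := by
    rw [Finset.sum_sub_distrib]
    linarith [hsum]
  rw [hdiff] at hdiff2
  have hz' : z a < z b := hz hlt
  have : g a - h a + (g b - h b) = 2 * (z b - z a) * (u (σ a) - u (σ b)) := by
    simp only [hg, hh, hτa, hτb]; ring
  rw [this] at hdiff2
  nlinarith
end

section
/- Fix points z_1, ..., z_n ∈ ℝ^d and u_1, ..., u_k ∈ ℝ^d, and let C_{ij} = ‖z_i − u_j‖_2^2 (squared Euclidean distance). Let P* ∈ B(n,k) be any minimizer of P ↦ Σ_{i,j} C_{ij} P_{ij} over the scaled Birkhoff polytope B(n,k). Define the barycentric map T(z_i) = n Σ_{j=1}^k P*_{ij} u_j for i = 1,...,n. Then the graph { (z_i, T(z_i)) : i ∈ {1,...,n} } is cyclically monotone. -/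
open RealInnerProductSpace

/-- A set `Γ ⊆ ℝ^d × ℝ^d` is cyclically monotone if for every family
`(x_0, y_0), ..., (x_m, y_m)` of points of `Γ`,
`Σ_i ⟪y_i, x_{i+1} − x_i⟫ ≤ 0`, indices taken cyclically. -/
def CyclicallyMonotone {d : ℕ}
    (Γ : Set (EuclideanSpace ℝ (Fin d) × EuclideanSpace ℝ (Fin d))) : Prop :=
  ∀ (m : ℕ) (p : Fin (m + 1) → EuclideanSpace ℝ (Fin d) × EuclideanSpace ℝ (Fin d)),
    (∀ a, p a ∈ Γ) → ∑ a, ⟪(p a).2, (p (a + 1)).1 - (p a).1⟫ ≤ 0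

/-- the graph of the barycentric map associated to an optimal
coupling for the squared Euclidean cost is cyclically monotone. -/
theorem barycentric_map_cyclically_monotone (d n k : ℕ)
    (z : Fin n → EuclideanSpace ℝ (Fin d)) (u : Fin k → EuclideanSpace ℝ (Fin d))
    (P : Matrix (Fin n) (Fin k) ℝ) (hP : P ∈ scaledBirkhoff n k)
    (hopt : ∀ Q ∈ scaledBirkhoff n k,
      ∑ i, ∑ j, ‖z i - u j‖ ^ 2 * P i j ≤ ∑ i, ∑ j, ‖z i - u j‖ ^ 2 * Q i j) :
    CyclicallyMonotone
      {p | ∃ i : Fin n, p = (z i, (n : ℝ) • ∑ j, P i j • u j)} := by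
  intro m p hp
  choose idx hidx using hp
  obtain ⟨hPnn, hProw, hPcol⟩ := hP
  have hn : 0 < n := (idx 0).pos
  have hm1 : ((m : ℝ) + 1) ≠ 0 := by positivity
  set ε : ℝ := 1 / ((m : ℝ) + 1) with hεdef
  have hεpos : 0 < ε := by positivity
  have hεm : ε * ((m : ℝ) + 1) = 1 := by rw [hεdef]; exact one_div_mul_cancel hm1
  -- reindexing lemma: summing over a+1 is the same as summing over a
  have hreidx : ∀ (f : Fin (m + 1) → ℝ), ∑ a, f (a + 1) = ∑ a, f a := by
    intro f
    exact Fintype.sum_equiv (Equiv.addRight 1) (fun a => f (a + 1)) f (fun a => rfl)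
  -- the perturbation matrix
  set Δ : Matrix (Fin n) (Fin k) ℝ := fun i j =>
    ∑ a : Fin (m + 1), ((if i = idx (a + 1) then P (idx a) j else 0)
      - (if i = idx a then P (idx a) j else 0)) with hΔdef
  set Q : Matrix (Fin n) (Fin k) ℝ := fun i j => P i j + ε * Δ i j with hQdef
  -- Q is in the scaled Birkhoff polytope
  have hQnn : ∀ i j, 0 ≤ Q i j := by
    intro i j
    have hb : -(((m : ℝ) + 1) * P i j) ≤ Δ i j := by
      have : ∀ a : Fin (m + 1),
          -(P i j) ≤ (if i = idx (a + 1) then P (idx a) j else 0)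
            - (if i = idx a then P (idx a) j else 0) := by
        intro a
        have h1 : (0 : ℝ) ≤ if i = idx (a + 1) then P (idx a) j else 0 := by
          split_ifs
          exacts [hPnn _ _, le_rfl]
        have h2 : (if i = idx a then P (idx a) j else 0) ≤ P i j := by
          split_ifs with h
          · rw [h]
          · exact hPnn _ _
        linarith
      calc -(((m : ℝ) + 1) * P i j) = ∑ _a : Fin (m + 1), -(P i j) := by
            rw [Finset.sum_const, Finset.card_univ, Fintype.card_fin, nsmul_eq_mul]
            push_cast; ring
        _ ≤ Δ i j := Finset.sum_le_sum fun a _ => this a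
    have : ε * -(((m : ℝ) + 1) * P i j) ≤ ε * Δ i j :=
      mul_le_mul_of_nonneg_left hb hεpos.le
    have heq : ε * -(((m : ℝ) + 1) * P i j) = -(P i j) := by
      rw [mul_neg, ← mul_assoc, hεm]; ring
    have h2 : -(P i j) ≤ ε * Δ i j := heq ▸ this
    simp only [hQdef]
    linarith
  have hΔrow : ∀ i, ∑ j, Δ i j = 0 := by
    intro i
    have hswap : ∑ j, Δ i j = ∑ a : Fin (m + 1),
        ((if i = idx (a + 1) then (1 : ℝ) / n else 0) - (if i = idx a then (1 : ℝ) / n else 0)) := by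
      rw [Finset.sum_comm]
      refine Finset.sum_congr rfl fun a _ => ?_
      rw [Finset.sum_sub_distrib]
      congr 1 <;> split_ifs <;> simp [hProw]
    rw [hswap, Finset.sum_sub_distrib,
      hreidx (fun a => if i = idx a then (1 : ℝ) / n else 0), sub_self]
  have hΔcol : ∀ j, ∑ i, Δ i j = 0 := by
    intro j
    rw [Finset.sum_comm]
    refine Finset.sum_eq_zero fun a _ => ?_
    rw [Finset.sum_sub_distrib]
    simp [Finset.sum_ite_eq']
  have hQmem : Q ∈ scaledBirkhoff n k := by
    refine ⟨hQnn, fun i => ?_, fun j => ?_⟩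
    · simp only [hQdef]
      rw [Finset.sum_add_distrib, ← Finset.mul_sum, hΔrow, hProw]
      ring
    · simp only [hQdef]
      rw [Finset.sum_add_distrib, ← Finset.mul_sum, hΔcol, hPcol]
      ring
  -- the first-order optimality condition
  have hD0 : 0 ≤ ∑ i, ∑ j, ‖z i - u j‖ ^ 2 * Δ i j := by
    have h := hopt Q hQmem
    have hexp : ∑ i, ∑ j, ‖z i - u j‖ ^ 2 * Q i j
        = (∑ i, ∑ j, ‖z i - u j‖ ^ 2 * P i j) + ε * ∑ i, ∑ j, ‖z i - u j‖ ^ 2 * Δ i j := by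
      rw [Finset.mul_sum, ← Finset.sum_add_distrib]
      refine Finset.sum_congr rfl fun i _ => ?_
      rw [Finset.mul_sum, ← Finset.sum_add_distrib]
      refine Finset.sum_congr rfl fun j _ => ?_
      simp only [hQdef]; ring
    nlinarith [hεpos]
  -- rewrite the directional derivative along the cycle
  have hDeq : ∑ i, ∑ j, ‖z i - u j‖ ^ 2 * Δ i j
      = ∑ a : Fin (m + 1), ∑ j,
          (‖z (idx (a + 1)) - u j‖ ^ 2 - ‖z (idx a) - u j‖ ^ 2) * P (idx a) j := by
    rw [Finset.sum_comm]
    calc ∑ j, ∑ i, ‖z i - u j‖ ^ 2 * Δ i j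
        = ∑ j, ∑ a : Fin (m + 1),
            (‖z (idx (a + 1)) - u j‖ ^ 2 - ‖z (idx a) - u j‖ ^ 2) * P (idx a) j := by
          refine Finset.sum_congr rfl fun j _ => ?_
          simp only [hΔdef, Finset.mul_sum]
          rw [Finset.sum_comm]
          refine Finset.sum_congr rfl fun a _ => ?_
          simp [mul_sub, mul_ite, mul_zero, Finset.sum_sub_distrib, Finset.sum_ite_eq', sub_mul]
      _ = _ := by rw [Finset.sum_comm]
  -- expand the cost differences
  have key : ∀ (x y w : EuclideanSpace ℝ (Fin d)),
      ‖x - w‖ ^ 2 - ‖y - w‖ ^ 2 = ‖x‖ ^ 2 - ‖y‖ ^ 2 - 2 * ⟪x - y, w⟫ := by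
    intro x y w
    rw [norm_sub_sq_real, norm_sub_sq_real, inner_sub_left]
    ring
  have hE : ∀ a : Fin (m + 1),
      ∑ j, (‖z (idx (a + 1)) - u j‖ ^ 2 - ‖z (idx a) - u j‖ ^ 2) * P (idx a) j
      = (‖z (idx (a + 1))‖ ^ 2 - ‖z (idx a)‖ ^ 2) / n
        - 2 * ⟪z (idx (a + 1)) - z (idx a), ∑ j, P (idx a) j • u j⟫ := by
    intro a
    rw [inner_sum]
    simp only [real_inner_smul_right, key]
    rw [Finset.mul_sum]
    have h1 : (‖z (idx (a + 1))‖ ^ 2 - ‖z (idx a)‖ ^ 2) / n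
        = ∑ j, (‖z (idx (a + 1))‖ ^ 2 - ‖z (idx a)‖ ^ 2) * P (idx a) j := by
      rw [← Finset.mul_sum, hProw]
      ring
    rw [h1, ← Finset.sum_sub_distrib]
    refine Finset.sum_congr rfl fun j _ => ?_
    ring
  -- conclude
  have hsum : ∑ a : Fin (m + 1),
      ⟪z (idx (a + 1)) - z (idx a), ∑ j, P (idx a) j • u j⟫ ≤ 0 := by
    have htel : ∑ a : Fin (m + 1),
        (‖z (idx (a + 1))‖ ^ 2 - ‖z (idx a)‖ ^ 2) / n = 0 := by
      simp only [sub_div]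
      rw [Finset.sum_sub_distrib, hreidx (fun a => ‖z (idx a)‖ ^ 2 / n), sub_self]
    have := hD0
    rw [hDeq] at this
    simp only [hE] at this
    rw [Finset.sum_sub_distrib, htel] at this
    rw [← Finset.mul_sum] at this
    linarith
  have hgoal : ∑ a : Fin (m + 1), ⟪(p a).2, (p (a + 1)).1 - (p a).1⟫
      = (n : ℝ) * ∑ a : Fin (m + 1),
          ⟪z (idx (a + 1)) - z (idx a), ∑ j, P (idx a) j • u j⟫ := by
    rw [Finset.mul_sum]
    refine Finset.sum_congr rfl fun a _ => ?_
    rw [hidx a, hidx (a + 1)]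
    simp only [real_inner_smul_left]
    rw [real_inner_comm]
  rw [hgoal]
  exact mul_nonpos_of_nonneg_of_nonpos (by positivity) hsum
end

section
/- Fix points z_1, ..., z_n ∈ ℝ^d and u_1, ..., u_k ∈ ℝ^d, and let P* ∈ B(n,k) be any minimizer of P ↦ Σ_{i,j} ‖z_i − u_j‖_2^2 P_{ij} over the scaled Birkhoff polytope B(n,k). Then there exists a convex function Φ : ℝ^d → ℝ such that for every i ∈ {1,...,n}: (a) u_j is a subgradient of Φ at z_i for every j with P*_{ij} > 0, and (b) the barycenter n Σ_{j=1}^k P*_{ij} u_j is a subgradient of Φ at z_i. -/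
open RealInnerProductSpace

/-!
Choose, for every ordered pair of columns `j, j'`, a row `r` in the support of column `j`
maximising `⟪z r, u j' - u j⟫`, and call the maximum `w j j'`. Shifting a little mass inside the
rows along a permutation `σ` of the columns keeps the coupling in `B(n,k)`, so by optimality the
cost cannot drop; after expanding the squares this says `∑ j, w j (σ j) ≤ 0`. Thus the weighted
graph on the columns has no positive cycle, heaviest simple walks give potentials `g` with
`g j + w j j' ≤ g j'`, and `Φ x = max_j (⟪u j, x⟫ - g j)` is attained by `u j` at `z i` whenever
`P i j > 0`. The barycenter is a convex combination of these subgradients.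
-/

open Filter Topology

section Potential

variable {α : Type*} (w : α → α → ℝ)

def walkWeight (l : List α) : ℝ :=
  (List.zipWith w l l.tail).sum

@[simp] lemma walkWeight_singleton (a : α) : walkWeight w [a] = 0 := rfl

@[simp] lemma walkWeight_cons_cons (a b : α) (l : List α) :
    walkWeight w (a :: b :: l) = w a b + walkWeight w (b :: l) := rfl

lemma walkWeight_append_cons (s : List α) (a : α) (t : List α) :
    walkWeight w (s ++ a :: t) = walkWeight w (s ++ [a]) + walkWeight w (a :: t) := by
  induction s with
  | nil => simp
  | cons x s ih =>
    cases s with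
    | nil => simp
    | cons y s => simp only [List.cons_append, walkWeight_cons_cons] at ih ⊢; rw [ih]; ring

variable [DecidableEq α]

lemma walkWeight_cycle_eq_sum_formPerm [Fintype α] (hdiag : ∀ a, w a a = 0) {b : α}
    {l : List α} (hl : (b :: l).Nodup) :
    walkWeight w (b :: l ++ [b]) = ∑ a, w a ((b :: l).formPerm a) := by
  set c := b :: l
  have hsupp : ∑ a ∈ c.toFinset, w a (c.formPerm a) = ∑ a, w a (c.formPerm a) :=
    Finset.sum_subset (Finset.subset_univ _) fun a _ ha => by
      rw [List.formPerm_apply_of_notMem (by simpa using ha), hdiag]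
  have hnext : c.map (fun a => w a (c.formPerm a)) = List.zipWith w c (c.rotate 1) := by
    refine List.ext_getElem (by simp) fun i h₁ h₂ => ?_
    rw [List.getElem_map, List.getElem_zipWith, List.formPerm_apply_getElem _ hl,
      List.getElem_rotate]
  have hclosed : List.zipWith w (c ++ [b]) (c ++ [b]).tail = List.zipWith w c (c.rotate 1) := by
    rw [show (c ++ [b]).tail = c.rotate 1 ++ [] by simp [c], List.zipWith_append (by simp),
      List.zipWith_nil_right, List.append_nil]
  rw [← hsupp, List.sum_toFinset _ hl, hnext, walkWeight, hclosed]

variable {w}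

lemma exists_nodup_walkWeight_ge
    (hcycle : ∀ b l, (b :: l).Nodup → walkWeight w (b :: l ++ [b]) ≤ 0)
    {l : List α} (hl : l.Nodup) (b : α) :
    ∃ l', (l' ++ [b]).Nodup ∧ walkWeight w (l ++ [b]) ≤ walkWeight w (l' ++ [b]) := by
  by_cases hb : b ∈ l
  · obtain ⟨s, t, rfl⟩ := List.append_of_mem hb
    refine ⟨s, hl.sublist (by simp), ?_⟩
    have hcut := walkWeight_append_cons w s b (t ++ [b])
    have hloop := hcycle b t (hl.sublist (by simp))
    simp only [List.append_assoc, List.cons_append] at hcut hloop ⊢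
    linarith
  · exact ⟨l, by simpa using hl.concat hb, le_rfl⟩

theorem exists_potential_of_sum_perm_nonpos [Fintype α] (hdiag : ∀ a, w a a = 0)
    (hperm : ∀ σ : Equiv.Perm α, ∑ a, w a (σ a) ≤ 0) :
    ∃ g : α → ℝ, ∀ a b, g a + w a b ≤ g b := by
  have hcycle b l (hl : (b :: l).Nodup) : walkWeight w (b :: l ++ [b]) ≤ 0 := by
    rw [walkWeight_cycle_eq_sum_formPerm w hdiag hl]
    exact hperm _
  set walks : α → Set ℝ := fun b => (fun l => walkWeight w (l ++ [b])) '' {l | (l ++ [b]).Nodup}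
  have hbdd b : BddAbove (walks b) :=
    (((List.finite_length_le α (Fintype.card α)).subset fun l hl =>
      (List.Nodup.sublist (by simp) hl).length_le_card).image _).bddAbove
  refine ⟨fun b => sSup (walks b), fun a b => ?_⟩
  rw [← le_sub_iff_add_le]
  refine csSup_le ⟨_, [], by simp, rfl⟩ ?_
  rintro _ ⟨l, hl, rfl⟩
  obtain ⟨l', hl', hle⟩ := exists_nodup_walkWeight_ge hcycle hl b
  have hstep : walkWeight w (l ++ [a] ++ [b]) = walkWeight w (l ++ [a]) + w a b := by
    simp [walkWeight_append_cons w l a [b]]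
  rw [le_sub_iff_add_le, ← hstep]
  exact hle.trans (le_csSup (hbdd b) ⟨l', hl', rfl⟩)

end Potential

section Coupling

variable {n k : ℕ} {P : Matrix (Fin n) (Fin k) ℝ}

lemma exists_pos_of_mem_scaledBirkhoff_col (hP : P ∈ scaledBirkhoff n k) (j : Fin k) :
    ∃ i, 0 < P i j := by
  obtain ⟨i, -, hi⟩ := Finset.exists_lt_of_sum_lt (s := Finset.univ) (f := 0)
    (g := fun i => P i j) (by rw [hP.2.2 j]; simpa using j.pos)
  exact ⟨i, hi⟩

lemma exists_pos_of_mem_scaledBirkhoff_row (hP : P ∈ scaledBirkhoff n k) (i : Fin n) :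
    ∃ j, 0 < P i j := by
  obtain ⟨j, -, hj⟩ := Finset.exists_lt_of_sum_lt (s := Finset.univ) (f := 0)
    (g := fun j => P i j) (by rw [hP.2.1 i]; simpa using i.pos)
  exact ⟨j, hj⟩

lemma exists_pos_add_smul_mem_scaledBirkhoff (hP : P ∈ scaledBirkhoff n k)
    {D : Matrix (Fin n) (Fin k) ℝ} (hrow : ∀ i, ∑ j, D i j = 0) (hcol : ∀ j, ∑ i, D i j = 0)
    (hsupp : ∀ i j, D i j < 0 → 0 < P i j) :
    ∃ ε : ℝ, 0 < ε ∧ P + ε • D ∈ scaledBirkhoff n k := by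
  obtain ⟨hnonneg, hProw, hPcol⟩ := hP
  have hsmall : ∀ᶠ ε in 𝓝[>] (0 : ℝ), ∀ i j, 0 ≤ P i j + ε * D i j := by
    simp only [eventually_all]
    intro i j
    rcases le_or_gt 0 (D i j) with hD | hD
    · filter_upwards [self_mem_nhdsWithin] with ε hε
      exact add_nonneg (hnonneg i j) (mul_nonneg (le_of_lt hε) hD)
    · have hlim : Tendsto (fun ε => P i j + ε * D i j) (𝓝[>] 0) (𝓝 (P i j)) := by
        exact (Continuous.tendsto' (by fun_prop) 0 _ (by simp)).mono_left nhdsWithin_le_nhds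
      exact (hlim.eventually_const_lt (hsupp i j hD)).mono fun _ h => h.le
  obtain ⟨ε, hε, hεpos⟩ := (hsmall.and self_mem_nhdsWithin).exists
  refine ⟨ε, hεpos, hε, fun i => ?_, fun j => ?_⟩
  · simp [Finset.sum_add_distrib, ← Finset.mul_sum, hProw, hrow]
  · simp [Finset.sum_add_distrib, ← Finset.mul_sum, hPcol, hcol]

lemma sum_mul_nonneg_of_optimal (C : Fin n → Fin k → ℝ) (hP : P ∈ scaledBirkhoff n k)
    (hopt : ∀ Q ∈ scaledBirkhoff n k, ∑ i, ∑ j, C i j * P i j ≤ ∑ i, ∑ j, C i j * Q i j)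
    {D : Matrix (Fin n) (Fin k) ℝ} (hrow : ∀ i, ∑ j, D i j = 0) (hcol : ∀ j, ∑ i, D i j = 0)
    (hsupp : ∀ i j, D i j < 0 → 0 < P i j) :
    0 ≤ ∑ i, ∑ j, C i j * D i j := by
  obtain ⟨ε, hε, hQ⟩ := exists_pos_add_smul_mem_scaledBirkhoff hP hrow hcol hsupp
  have hcost := hopt _ hQ
  simp only [Matrix.add_apply, Matrix.smul_apply, smul_eq_mul, mul_add, Finset.sum_add_distrib,
    mul_left_comm _ ε, ← Finset.mul_sum, le_add_iff_nonneg_right] at hcost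
  exact nonneg_of_mul_nonneg_right hcost hε

-- Inside row `r j`, shift mass from column `j` to column `σ j`; since `σ` is a bijection,
-- every column gains as much as it loses.
lemma sum_le_sum_comp_perm_of_optimal (C : Fin n → Fin k → ℝ) (hP : P ∈ scaledBirkhoff n k)
    (hopt : ∀ Q ∈ scaledBirkhoff n k, ∑ i, ∑ j, C i j * P i j ≤ ∑ i, ∑ j, C i j * Q i j)
    (r : Fin k → Fin n) (hr : ∀ j, 0 < P (r j) j) (σ : Equiv.Perm (Fin k)) :
    ∑ j, C (r j) j ≤ ∑ j, C (r j) (σ j) := by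
  set D : Matrix (Fin n) (Fin k) ℝ :=
    ∑ j, (Matrix.single (r j) (σ j) 1 - Matrix.single (r j) j 1)
  have hD i j : D i j =
      ∑ a, ((if r a = i ∧ σ a = j then 1 else 0) - if r a = i ∧ a = j then 1 else 0) := by
    simp only [D, Matrix.sum_apply, Matrix.sub_apply, Matrix.single_apply]
  have hrow i : ∑ j, D i j = 0 := by
    simp only [hD]
    rw [Finset.sum_comm]
    refine Finset.sum_eq_zero fun a _ => ?_
    simp [Finset.sum_sub_distrib, ite_and]
  have hcol j : ∑ i, D i j = 0 := by
    have hσ : ∑ a, (if σ a = j then (1 : ℝ) else 0) = 1 := by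
      rw [Equiv.sum_comp σ fun b => if b = j then (1 : ℝ) else 0]
      simp
    simp only [hD]
    rw [Finset.sum_comm]
    simp [Finset.sum_sub_distrib, ite_and, hσ]
  have hsupp i j (h : D i j < 0) : 0 < P i j := by
    obtain rfl : r j = i := by
      by_contra hne
      refine h.not_ge (hD i j ▸ Finset.sum_nonneg fun a _ => ?_)
      grind
    exact hr j
  have hcost : ∑ i, ∑ j, C i j * D i j = ∑ a, (C (r a) (σ a) - C (r a) a) := by
    simp only [hD, Finset.mul_sum]
    rw [Finset.sum_congr rfl fun i _ => Finset.sum_comm, Finset.sum_comm]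
    refine Finset.sum_congr rfl fun a _ => ?_
    simp [mul_sub, Finset.sum_sub_distrib, ite_and]
  have := sum_mul_nonneg_of_optimal C hP hopt hrow hcol hsupp
  rw [hcost, Finset.sum_sub_distrib] at this
  linarith

variable {E : Type*} [NormedAddCommGroup E] [InnerProductSpace ℝ E]

lemma sum_inner_sub_comp_perm_nonpos (z : Fin n → E) (u : Fin k → E)
    (hP : P ∈ scaledBirkhoff n k)
    (hopt : ∀ Q ∈ scaledBirkhoff n k,
      ∑ i, ∑ j, ‖z i - u j‖ ^ 2 * P i j ≤ ∑ i, ∑ j, ‖z i - u j‖ ^ 2 * Q i j)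
    (r : Fin k → Fin n) (hr : ∀ j, 0 < P (r j) j) (σ : Equiv.Perm (Fin k)) :
    ∑ j, ⟪z (r j), u (σ j) - u j⟫ ≤ 0 := by
  have hcost := sum_le_sum_comp_perm_of_optimal (fun i j => ‖z i - u j‖ ^ 2) hP hopt r hr σ
  have hnorm := Equiv.sum_comp σ fun j => ‖u j‖ ^ 2
  simp only [norm_sub_sq_real, Finset.sum_add_distrib, Finset.sum_sub_distrib,
    ← Finset.mul_sum, hnorm] at hcost
  simp only [inner_sub_right, Finset.sum_sub_distrib]
  linarith

theorem exists_potential_of_optimal (z : Fin n → E) (u : Fin k → E)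
    (hP : P ∈ scaledBirkhoff n k)
    (hopt : ∀ Q ∈ scaledBirkhoff n k,
      ∑ i, ∑ j, ‖z i - u j‖ ^ 2 * P i j ≤ ∑ i, ∑ j, ‖z i - u j‖ ^ 2 * Q i j) :
    ∃ g : Fin k → ℝ, ∀ i j, 0 < P i j → ∀ j', ⟪u j', z i⟫ - g j' ≤ ⟪u j, z i⟫ - g j := by
  have hbest j j' : ∃ i, 0 < P i j ∧
      ∀ i', 0 < P i' j → ⟪z i', u j' - u j⟫ ≤ ⟪z i, u j' - u j⟫ := by
    obtain ⟨i, hi, hmax⟩ := Finset.exists_max_image {i | 0 < P i j}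
      (fun i => ⟪z i, u j' - u j⟫)
      (by obtain ⟨i, hi⟩ := exists_pos_of_mem_scaledBirkhoff_col hP j
          exact ⟨i, by simpa using hi⟩)
    exact ⟨i, by simpa using hi, fun i' hi' => hmax i' (by simpa using hi')⟩
  choose row hrow_pos hrow_max using hbest
  obtain ⟨g, hg⟩ := exists_potential_of_sum_perm_nonpos
    (w := fun j j' => ⟪z (row j j'), u j' - u j⟫) (by simp) fun σ =>
      sum_inner_sub_comp_perm_nonpos z u hP hopt (fun j => row j (σ j)) (fun j => hrow_pos _ _) σ
  refine ⟨g, fun i j hij j' => ?_⟩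
  have hmax := hrow_max j j' i hij
  have hgap := hg j j'
  simp only [inner_sub_right] at hmax hgap
  rw [real_inner_comm (z i), real_inner_comm (z i)]
  linarith

end Coupling

section Subgradient

variable {E : Type*} [NormedAddCommGroup E] [InnerProductSpace ℝ E]

def HasSubgradientAt (Φ : E → ℝ) (y x : E) : Prop :=
  ∀ x', Φ x + ⟪y, x' - x⟫ ≤ Φ x'

lemma HasSubgradientAt.sum_smul {ι : Type*} [Fintype ι] {Φ : E → ℝ} {x : E} {v : ι → E}
    {t : ι → ℝ} (ht : ∀ j, 0 ≤ t j) (ht_sum : ∑ j, t j = 1)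
    (hv : ∀ j, 0 < t j → HasSubgradientAt Φ (v j) x) :
    HasSubgradientAt Φ (∑ j, t j • v j) x := by
  intro x'
  calc Φ x + ⟪∑ j, t j • v j, x' - x⟫ = ∑ j, t j * (Φ x + ⟪v j, x' - x⟫) := by
        simp [sum_inner, real_inner_smul_left, mul_add, Finset.sum_add_distrib, ← Finset.sum_mul,
          ht_sum]
    _ ≤ ∑ j, t j * Φ x' := Finset.sum_le_sum fun j _ => by
        rcases (ht j).eq_or_lt with h0 | hpos
        · simp [← h0]
        · exact mul_le_mul_of_nonneg_left (hv j hpos x') hpos.le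
    _ = Φ x' := by rw [← Finset.sum_mul, ht_sum, one_mul]

variable {ι : Type*} [Fintype ι] [Nonempty ι] (u : ι → E) (g : ι → ℝ)

def maxAffine : E → ℝ :=
  Finset.univ.sup' Finset.univ_nonempty fun j x => ⟪u j, x⟫ - g j

lemma convexOn_maxAffine : ConvexOn ℝ Set.univ (maxAffine u g) :=
  Finset.sup'_induction _ _ (fun _ h₁ _ h₂ => h₁.sup h₂) fun j _ =>
    ((innerₛₗ ℝ (u j)).convexOn convex_univ).sub (concaveOn_const _ convex_univ)

lemma inner_sub_le_maxAffine (j : ι) (x : E) : ⟪u j, x⟫ - g j ≤ maxAffine u g x := by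
  rw [maxAffine, Finset.sup'_apply]
  exact Finset.le_sup' (fun j => ⟪u j, x⟫ - g j) (Finset.mem_univ j)

lemma hasSubgradientAt_maxAffine {j : ι} {x : E}
    (hj : ∀ j', ⟪u j', x⟫ - g j' ≤ ⟪u j, x⟫ - g j) :
    HasSubgradientAt (maxAffine u g) (u j) x := by
  have hx : maxAffine u g x = ⟪u j, x⟫ - g j := by
    refine le_antisymm ?_ (inner_sub_le_maxAffine u g j x)
    rw [maxAffine, Finset.sup'_apply]
    exact Finset.sup'_le _ _ fun j' _ => hj j'
  intro x'
  rw [hx, inner_sub_right]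
  linarith [inner_sub_le_maxAffine u g j x']

end Subgradient

/-- for an optimal coupling `P*` for the squared Euclidean cost,
there is a convex potential `Φ` such that every active target point `u_j`
(with `P*_{ij} > 0`) and the barycenter `n Σ_j P*_{ij} u_j` are subgradients
of `Φ` at `z_i`. -/
theorem exists_convex_potential_for_optimal_coupling (d n k : ℕ)
    (z : Fin n → EuclideanSpace ℝ (Fin d)) (u : Fin k → EuclideanSpace ℝ (Fin d))
    (P : Matrix (Fin n) (Fin k) ℝ) (hP : P ∈ scaledBirkhoff n k)
    (hopt : ∀ Q ∈ scaledBirkhoff n k,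
      ∑ i, ∑ j, ‖z i - u j‖ ^ 2 * P i j ≤ ∑ i, ∑ j, ‖z i - u j‖ ^ 2 * Q i j) :
    ∃ Φ : EuclideanSpace ℝ (Fin d) → ℝ,
      ConvexOn ℝ Set.univ Φ ∧
      ∀ i : Fin n,
        (∀ j : Fin k, 0 < P i j →
          ∀ z' : EuclideanSpace ℝ (Fin d), Φ z' ≥ Φ (z i) + ⟪u j, z' - z i⟫) ∧
        (∀ z' : EuclideanSpace ℝ (Fin d),
          Φ z' ≥ Φ (z i) + ⟪(n : ℝ) • ∑ j, P i j • u j, z' - z i⟫) := by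
  rcases isEmpty_or_nonempty (Fin n) with _ | ⟨⟨i₀⟩⟩
  · exact ⟨0, convexOn_const 0 convex_univ, isEmptyElim⟩
  have : Nonempty (Fin k) := ⟨(exists_pos_of_mem_scaledBirkhoff_row hP i₀).choose⟩
  obtain ⟨g, hg⟩ := exists_potential_of_optimal z u hP hopt
  have hsub i j (hij : 0 < P i j) : HasSubgradientAt (maxAffine u g) (u j) (z i) :=
    hasSubgradientAt_maxAffine u g (hg i j hij)
  refine ⟨maxAffine u g, convexOn_maxAffine u g, fun i => ⟨hsub i, ?_⟩⟩
  have hweights : ∑ j, (n : ℝ) * P i j = 1 := by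
    rw [← Finset.mul_sum, hP.2.1 i, mul_one_div_cancel (Nat.cast_ne_zero.2 i.pos.ne')]
  have hbar : HasSubgradientAt (maxAffine u g) (∑ j, ((n : ℝ) * P i j) • u j) (z i) :=
    .sum_smul (fun j => mul_nonneg n.cast_nonneg (hP.1 i j)) hweights fun j hj =>
      hsub i j (pos_of_mul_pos_right hj n.cast_nonneg)
  rwa [Finset.smul_sum, Finset.sum_congr rfl fun j _ => smul_smul (n : ℝ) (P i j) (u j)]
end

section
/- Let f : ℝ^d → ℝ^d be permutation equivariant, meaning f(Px) = P f(x) for every d×d permutation matrix P and every x ∈ ℝ^d, and suppose the graph of f is cyclically monotone. Then f is weakly intra-order preserving: for every x ∈ ℝ^d and every pair of indices i, j ∈ {1,...,d}, (x_i − x_j)(f_i(x) − f_j(x)) ≥ 0. In particular, if x_i = x_j then f_i(x) = f_j(x). -/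
open RealInnerProductSpace

/-! Cyclic monotonicity on two points gives `⟪f x - f y, x - y⟫ ≥ 0`. Take for `y` the vector `x`
with coordinates `i, j` swapped: by equivariance `f y` is `f x` with the same coordinates swapped,
and the pairing becomes `2 (x_i - x_j)(f_i(x) - f_j(x))`. If `x_i = x_j` the swap fixes `x`, hence
by equivariance it also fixes `f x`. -/

theorem CyclicallyMonotone.inner_sub_nonneg {d : ℕ}
    {Γ : Set (EuclideanSpace ℝ (Fin d) × EuclideanSpace ℝ (Fin d))} (hΓ : CyclicallyMonotone Γ)
    {x u y v : EuclideanSpace ℝ (Fin d)} (hxu : (x, u) ∈ Γ) (hyv : (y, v) ∈ Γ) :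
    0 ≤ ⟪u - v, x - y⟫ := by
  have hcycle := hΓ 1 ![(x, u), (y, v)] (Fin.forall_fin_two.2 ⟨hxu, hyv⟩)
  simp only [Nat.reduceAdd, Fin.isValue, Fin.sum_univ_two, Matrix.cons_val_zero, zero_add,
    Matrix.cons_val_one, Matrix.cons_val_fin_one, Fin.reduceAdd] at hcycle
  have hcycle_eq : ⟪u - v, x - y⟫ = -(⟪u, y - x⟫ + ⟪v, x - y⟫) := by
    rw [inner_sub_left, ← neg_sub x y, inner_neg_right]
    ring
  linarith

section SwapCoordinates

variable {ι : Type*} [DecidableEq ι]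

theorem EuclideanSpace.inner_sub_swap_sub_swap [Fintype ι] (u x : EuclideanSpace ℝ ι) (i j : ι) :
    ⟪u - WithLp.toLp 2 (fun k => u (Equiv.swap i j k)),
      x - WithLp.toLp 2 (fun k => x (Equiv.swap i j k))⟫ = 2 * ((x i - x j) * (u i - u j)) := by
  rcases eq_or_ne i j with rfl | hij
  · simp
  simp only [PiLp.inner_apply, RCLike.inner_apply, conj_trivial, PiLp.sub_apply]
  rw [← Finset.sum_subset (Finset.subset_univ {i, j})]
  · rw [Finset.sum_pair hij, Equiv.swap_apply_left, Equiv.swap_apply_right]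
    ring
  · intro k _ hk
    simp only [Finset.mem_insert, Finset.mem_singleton, not_or] at hk
    simp [Equiv.swap_apply_of_ne_of_ne hk.1 hk.2]

theorem EuclideanSpace.toLp_comp_swap_of_eq {x : EuclideanSpace ℝ ι} {i j : ι} (h : x i = x j) :
    WithLp.toLp 2 (fun k => x (Equiv.swap i j k)) = x := by
  ext k
  rcases eq_or_ne k i with rfl | hki
  · simp [h]
  rcases eq_or_ne k j with rfl | hkj
  · simp [h]
  · simp [Equiv.swap_apply_of_ne_of_ne hki hkj]

end SwapCoordinates

/-- a permutation-equivariant map `f : ℝ^d → ℝ^d` with a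
cyclically monotone graph is weakly intra-order preserving:
`(x_i − x_j)(f_i(x) − f_j(x)) ≥ 0` for all `x` and indices `i, j`; in
particular `x_i = x_j` implies `f_i(x) = f_j(x)`. -/
theorem perm_equivariant_cyclically_monotone_weakly_IOP (d : ℕ)
    (f : EuclideanSpace ℝ (Fin d) → EuclideanSpace ℝ (Fin d))
    (hequiv : ∀ (σ : Equiv.Perm (Fin d)) (x : EuclideanSpace ℝ (Fin d)),
      f (WithLp.toLp 2 (fun i => x (σ i))) = WithLp.toLp 2 (fun i => f x (σ i)))
    (hcm : CyclicallyMonotone {p | ∃ x : EuclideanSpace ℝ (Fin d), p = (x, f x)}) :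
    (∀ (x : EuclideanSpace ℝ (Fin d)) (i j : Fin d),
      0 ≤ (x i - x j) * (f x i - f x j)) ∧
    (∀ (x : EuclideanSpace ℝ (Fin d)) (i j : Fin d),
      x i = x j → f x i = f x j) := by
  constructor
  · intro x i j
    have hmono := hcm.inner_sub_nonneg ⟨x, rfl⟩
      ⟨WithLp.toLp 2 (fun k => x (Equiv.swap i j k)), rfl⟩
    rw [hequiv (Equiv.swap i j) x, EuclideanSpace.inner_sub_swap_sub_swap] at hmono
    linarith
  · intro x i j h
    have hfix := hequiv (Equiv.swap i j) x
    rw [EuclideanSpace.toLp_comp_swap_of_eq h] at hfix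
    simpa using congrArg (fun v => v i) hfix
end
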